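/- Let $-\infty\le a<b\le\infty$, $q:(a,b)\to\mathbb{R}$, $\lambda\in\mathbb{R}$, and let $\phi_\lambda:(a,b)\to\mathbb{R}$ be twice differentiable with $-\phi_\lambda''+q\phi_\lambda=\lambda\phi_\lambda$ on $(a,b)$. Let $S:(a,b)\to\mathbb{R}$ be differentiable with $S'=\phi_\lambda^2$ and $S>0$ on $(a,b)$, and set $\tilde\phi=\phi_\lambda/S$. Then for every $z\in\mathbb{C}$ with $z\ne\lambda$ and every twice differentiable $u:(a,b)\to\mathbb{C}$ solving $-u''+qu=zu$ on $(a,b)$, the double commutation transform $u_S(x)=u(x)+\tfrac{1}{z-\lambda}\tilde\phi(x)W_x(\phi_\lambda,u)$ satisfies $W_x(\tilde\phi,\,u_S) = \tfrac{W_x(\phi_\lambda,u)}{S(x)}$ for all $x\in(a,b)$. -/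

import Mathlib

/-!
Write `W = W(φ_λ, u)` and `c = (z - λ)⁻¹`, so that `u_S = u + c φ̃ W`. Since both `φ_λ` and `u`
solve the same Schrödinger equation at energies `λ` and `z`, `W' = (λ - z) φ_λ u`, hence
`W(φ̃, u_S) = W(φ̃, u) + c φ̃² W' = W(φ̃, u) - φ̃² φ_λ u`. On the other hand the quotient rule
together with `S' = φ_λ²` gives `W(φ̃, u) = W(φ_λ, u) / S + φ_λ³ u / S²`, and the two cubic terms
cancel.
-/

noncomputable def wronskian (f : ℝ → ℝ) (g : ℝ → ℂ) (x : ℝ) : ℂ :=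
  f x * deriv g x - deriv f x * g x

section Wronskian

variable {f S : ℝ → ℝ} {g h : ℝ → ℂ} {x : ℝ}

theorem HasDerivAt.wronskian_eq {f' : ℝ} {g' : ℂ} (hf : HasDerivAt f f' x)
    (hg : HasDerivAt g g' x) : wronskian f g x = f x * g' - f' * g x := by
  rw [wronskian, hf.deriv, hg.deriv]

theorem hasDerivAt_wronskian {f'' : ℝ} {g'' : ℂ} (hf : DifferentiableAt ℝ f x)
    (hf' : HasDerivAt (deriv f) f'' x) (hg : DifferentiableAt ℝ g x)
    (hg' : HasDerivAt (deriv g) g'' x) :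
    HasDerivAt (wronskian f g) (f x * g'' - f'' * g x) x := by
  have h := (hf.hasDerivAt.ofReal_comp.mul hg').sub (hf'.ofReal_comp.mul hg.hasDerivAt)
  exact h.congr_deriv (by ring)

theorem hasDerivAt_wronskian_of_schrodinger {q : ℝ → ℝ} {μ : ℝ} {z : ℂ}
    (hf : DifferentiableAt ℝ f x) (hf' : DifferentiableAt ℝ (deriv f) x)
    (hf_eq : -deriv (deriv f) x + q x * f x = μ * f x)
    (hg : DifferentiableAt ℝ g x) (hg' : DifferentiableAt ℝ (deriv g) x)
    (hg_eq : -deriv (deriv g) x + (q x : ℂ) * g x = z * g x) :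
    HasDerivAt (wronskian f g) ((μ - z) * f x * g x) x := by
  refine (hasDerivAt_wronskian hf hf'.hasDerivAt hg hg'.hasDerivAt).congr_deriv ?_
  have hf_eqC : ((deriv (deriv f) x : ℝ) : ℂ) = q x * f x - μ * f x := by
    exact_mod_cast (by linarith : deriv (deriv f) x = q x * f x - μ * f x)
  rw [hf_eqC, (by linear_combination -hg_eq : deriv (deriv g) x = q x * g x - z * g x)]
  ring

theorem wronskian_add_const_mul_mul {h' : ℂ} (c : ℂ) (hf : DifferentiableAt ℝ f x)
    (hg : DifferentiableAt ℝ g x) (hh : HasDerivAt h h' x) :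
    wronskian f (fun t => g t + c * f t * h t) x = wronskian f g x + c * f x ^ 2 * h' := by
  have hfC := hf.hasDerivAt.ofReal_comp
  have hsum : HasDerivAt (fun t => g t + c * f t * h t) _ x :=
    hg.hasDerivAt.add ((hfC.const_mul c).mul hh)
  rw [hf.hasDerivAt.wronskian_eq hsum,
    hf.hasDerivAt.wronskian_eq hg.hasDerivAt]
  ring

theorem wronskian_div {s' : ℝ} (hf : DifferentiableAt ℝ f x) (hS : HasDerivAt S s' x)
    (hS0 : S x ≠ 0) (hg : DifferentiableAt ℝ g x) :
    wronskian (fun t => f t / S t) g x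
      = wronskian f g x / S x + f x * s' * g x / (S x : ℂ) ^ 2 := by
  have hquot : HasDerivAt (fun t => f t / S t) _ x := hf.hasDerivAt.div hS hS0
  rw [hquot.wronskian_eq hg.hasDerivAt,
    hf.hasDerivAt.wronskian_eq hg.hasDerivAt]
  have hS0C : (S x : ℂ) ≠ 0 := by exact_mod_cast hS0
  push_cast
  field_simp
  ring

end Wronskian

theorem stmt_7_general
    (q phil Sw : ℝ → ℝ) (lam : ℝ)
    (E : Set ℝ)
    (hl_d1 : ∀ x ∈ E, DifferentiableAt ℝ phil x)
    (hl_d2 : ∀ x ∈ E, DifferentiableAt ℝ (deriv phil) x)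
    (hl_eq : ∀ x ∈ E, -deriv (deriv phil) x + q x * phil x = lam * phil x)
    (hS_d : ∀ x ∈ E, HasDerivAt Sw (phil x ^ 2) x)
    (hS_pos : ∀ x ∈ E, 0 < Sw x)
    (phit : ℝ → ℝ) (hphit : phit = fun x => phil x / Sw x) :
    ∀ z : ℂ, z ≠ (lam : ℂ) → ∀ u : ℝ → ℂ,
      (∀ x ∈ E, DifferentiableAt ℝ u x) →
      (∀ x ∈ E, DifferentiableAt ℝ (deriv u) x) →
      (∀ x ∈ E, -deriv (deriv u) x + (q x : ℂ) * u x = z * u x) →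
      ∀ uS : ℝ → ℂ,
        uS = (fun x => u x + (z - lam)⁻¹ * (Complex.ofReal (phit x)) *
          (Complex.ofReal (phil x) * deriv u x
            - Complex.ofReal (deriv phil x) * u x)) →
        ∀ x ∈ E,
          Complex.ofReal (phit x) * deriv uS x
              - Complex.ofReal (deriv phit x) * uS x
            = (Complex.ofReal (phil x) * deriv u x
                - Complex.ofReal (deriv phil x) * u x) / (Sw x : ℂ) := by
  intro z hz u hu_d1 hu_d2 hu_eq uS huS x hx
  have hW := hasDerivAt_wronskian_of_schrodinger (hl_d1 x hx) (hl_d2 x hx) (hl_eq x hx)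
    (hu_d1 x hx) (hu_d2 x hx) (hu_eq x hx)
  have hphit_d : DifferentiableAt ℝ phit x := by
    rw [hphit]; exact (hl_d1 x hx).div (hS_d x hx).differentiableAt (hS_pos x hx).ne'
  have hS0 : (Sw x : ℂ) ≠ 0 := by exact_mod_cast (hS_pos x hx).ne'
  have hzl : z - lam ≠ 0 := sub_ne_zero.mpr hz
  have huS_W : uS = fun t => u t + (z - lam)⁻¹ * phit t * wronskian phil u t := huS
  change wronskian phit uS x = wronskian phil u x / Sw x
  rw [huS_W, wronskian_add_const_mul_mul _ hphit_d (hu_d1 x hx) hW, hphit,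
    wronskian_div (hl_d1 x hx) (hS_d x hx) (hS_pos x hx).ne' (hu_d1 x hx)]
  push_cast
  field_simp
  ring

/-- for the double commutation transform
`u_S = u + (z-λ)⁻¹ (φ_λ/S) W(φ_λ,u)` (with `S' = φ_λ²`, `S > 0`,
`φ̃ = φ_λ/S`) one has `W_x(φ̃, u_S) = W_x(φ_λ, u)/S(x)` on `(a,b)`. -/
theorem stmt_7 (a b : EReal) (hab : a < b)
    (q phil Sw : ℝ → ℝ) (lam : ℝ)
    (E : Set ℝ) (hE : E = {x : ℝ | a < (x : EReal) ∧ (x : EReal) < b})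
    (hl_d1 : ∀ x ∈ E, DifferentiableAt ℝ phil x)
    (hl_d2 : ∀ x ∈ E, DifferentiableAt ℝ (deriv phil) x)
    (hl_eq : ∀ x ∈ E, -deriv (deriv phil) x + q x * phil x = lam * phil x)
    (hS_d : ∀ x ∈ E, HasDerivAt Sw (phil x ^ 2) x)
    (hS_pos : ∀ x ∈ E, 0 < Sw x)
    (phit : ℝ → ℝ) (hphit : phit = fun x => phil x / Sw x) :
    ∀ z : ℂ, z ≠ (lam : ℂ) → ∀ u : ℝ → ℂ,
      (∀ x ∈ E, DifferentiableAt ℝ u x) →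
      (∀ x ∈ E, DifferentiableAt ℝ (deriv u) x) →
      (∀ x ∈ E, -deriv (deriv u) x + (q x : ℂ) * u x = z * u x) →
      ∀ uS : ℝ → ℂ,
        uS = (fun x => u x + (z - lam)⁻¹ * (Complex.ofReal (phit x)) *
          (Complex.ofReal (phil x) * deriv u x
            - Complex.ofReal (deriv phil x) * u x)) →
        ∀ x ∈ E,
          Complex.ofReal (phit x) * deriv uS x
              - Complex.ofReal (deriv phit x) * uS x
            = (Complex.ofReal (phil x) * deriv u x
                - Complex.ofReal (deriv phil x) * u x) / (Sw x : ℂ) :=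
  stmt_7_general q phil Sw lam E hl_d1 hl_d2 hl_eq hS_d hS_pos phit hphit
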